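/- Let R be a commutative ring, z ∈ R invertible, N ≥ 1 an integer, and a₁, …, a_N vectors in ℤ². For each k ∈ {1, …, N} let C_k denote the sequence of the N − 1 vectors a_s with s ≠ k. Then Σ_{σ ∈ S_N} z^{Λ(σ)} = Σ_{k=1}^{N} z^{Σ_{s ≠ k} a_k ∧ a_s} · Σ_{τ} z^{Λ_{C_k}(τ)}, where σ runs over all permutations of {1, …, N} and τ runs over all permutations of the index set of C_k. -/

import Mathlib

/-- The wedge product `a ∧ b = a₁b₂ − a₂b₁` of two vectors in `ℤ²`. -/
def wedge (a b : ℤ × ℤ) : ℤ := a.1 * b.2 - a.2 * b.1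

/-- `Λ(σ) = Σ_{s<t} a_{σ(s)} ∧ a_{σ(t)}` for a permutation `σ` of a linearly ordered
finite index set. -/
def Lam {ι : Type*} [LinearOrder ι] [Fintype ι] (a : ι → ℤ × ℤ) (σ : Equiv.Perm ι) : ℤ :=
  ∑ p ∈ Finset.univ.filter (fun p : ι × ι => p.1 < p.2), wedge (a (σ p.1)) (a (σ p.2))

/-!
Classify permutations `σ` of `Fin (n + 1)` by `k = σ 0` (via `Equiv.Perm.decomposeFin`). The pairs
`(0, t)` contribute `Σ_{s ≠ k} a_k ∧ a_s`, and the remaining pairs give `Λ` of a permutation of the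
other `n` vectors. The sum `Σ_τ z^{Λ(τ)}` over all permutations of a family only depends on the
family up to an arbitrary relabelling of its index set, because `Λ` itself is invariant under
order isomorphisms of the index set; this identifies the inner sum with the one over `C_k`.
-/

open Finset Equiv

lemma wedge_self (a : ℤ × ℤ) : wedge a a = 0 := by
  unfold wedge; ring

section OrderedWedgeSum

variable {ι κ : Type*} [LinearOrder ι] [Fintype ι] [LinearOrder κ] [Fintype κ]

def orderedWedgeSum (b : ι → ℤ × ℤ) : ℤ :=
  ∑ p ∈ univ.filter (fun p : ι × ι => p.1 < p.2), wedge (b p.1) (b p.2)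

lemma Lam_eq_orderedWedgeSum (a : ι → ℤ × ℤ) (σ : Perm ι) :
    Lam a σ = orderedWedgeSum (a ∘ σ) :=
  rfl

lemma orderedWedgeSum_comp_orderIso (b : κ → ℤ × ℤ) (o : ι ≃o κ) :
    orderedWedgeSum (b ∘ o) = orderedWedgeSum b :=
  Finset.sum_equiv (o.toEquiv.prodCongr o.toEquiv) (by simp) (by simp)

lemma orderedWedgeSum_fin_succ {n : ℕ} (b : Fin (n + 1) → ℤ × ℤ) :
    orderedWedgeSum b =
      ∑ j : Fin n, wedge (b 0) (b j.succ) + orderedWedgeSum (b ∘ Fin.succ) := by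
  simp [orderedWedgeSum, sum_filter, Fintype.sum_prod_type, Fin.sum_univ_succ, Fin.succ_pos]

lemma sum_Lam_comp_equiv [DecidableEq ι] [DecidableEq κ] {M : Type*} [AddCommMonoid M]
    (f : ℤ → M) (b : κ → ℤ × ℤ) (e : ι ≃ κ) :
    ∑ σ : Perm ι, f (Lam (b ∘ e) σ) = ∑ τ : Perm κ, f (Lam b τ) := by
  let o : ι ≃o κ := (Fintype.orderIsoFinOfCardEq ι rfl).symm.trans
    (Fintype.orderIsoFinOfCardEq κ (Fintype.card_congr e).symm)
  refine Fintype.sum_equiv (o.toEquiv.equivCongr e) _ _ fun σ => ?_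
  rw [Lam_eq_orderedWedgeSum, Lam_eq_orderedWedgeSum, ← orderedWedgeSum_comp_orderIso _ o]
  congr 2
  funext x
  simp

end OrderedWedgeSum

lemma Lam_decomposeFin_symm {n : ℕ} (a : Fin (n + 1) → ℤ × ℤ) (p : Fin (n + 1))
    (τ : Perm (Fin n)) :
    Lam a (Perm.decomposeFin.symm (p, τ)) =
      ∑ s, wedge (a p) (a s) + Lam (a ∘ swap 0 p ∘ Fin.succ) τ := by
  set σ := Perm.decomposeFin.symm (p, τ)
  have hσ0 : σ 0 = p := Perm.decomposeFin_symm_apply_zero p τ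
  have hσsucc : (a ∘ σ) ∘ Fin.succ = (a ∘ swap 0 p ∘ Fin.succ) ∘ τ :=
    funext fun j => congrArg a (Perm.decomposeFin_symm_apply_succ τ p j)
  have hrow : ∑ j : Fin n, wedge (a p) (a (σ j.succ)) = ∑ s, wedge (a p) (a s) := by
    rw [← Equiv.sum_comp σ (fun s => wedge (a p) (a s)), Fin.sum_univ_succ, hσ0, wedge_self,
      zero_add]
  rw [Lam_eq_orderedWedgeSum, orderedWedgeSum_fin_succ, hσsucc, Lam_eq_orderedWedgeSum]
  simpa only [Function.comp_apply, hσ0] using congrArg (· + _) hrow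

/-- `Σ_{σ ∈ S_N} z^{Λ(σ)} =
Σ_k z^{Σ_{s≠k} a_k ∧ a_s} · Σ_τ z^{Λ_{C_k}(τ)}`, where `C_k` is the sequence of
the vectors `a_s`, `s ≠ k`. -/
theorem stmt3 (R : Type*) [CommRing R] (z : Rˣ) (N : ℕ) (hN : 1 ≤ N)
    (a : Fin N → ℤ × ℤ) :
    ∑ σ : Equiv.Perm (Fin N), ((z ^ Lam a σ : Rˣ) : R)
      = ∑ k : Fin N,
          ((z ^ (∑ s ∈ Finset.univ.erase k, wedge (a k) (a s)) : Rˣ) : R) *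
            ∑ τ : Equiv.Perm {s : Fin N // s ≠ k},
              ((z ^ Lam (fun s : {s : Fin N // s ≠ k} => a s.1) τ : Rˣ) : R) := by
  obtain ⟨n, rfl⟩ : ∃ n, N = n + 1 := ⟨N - 1, by omega⟩
  rw [← Perm.decomposeFin.symm.sum_comp, Fintype.sum_prod_type]
  refine sum_congr rfl fun k _ => ?_
  let e : Fin n ≃ {s : Fin (n + 1) // s ≠ k} := (finSuccAboveEquiv 0).trans
    ((swap 0 k).subtypeEquiv fun s => not_congr (by rw [swap_apply_eq_iff, swap_apply_right]))
  rw [sum_erase (f := fun s => wedge (a k) (a s)) _ (wedge_self (a k)),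
    ← sum_Lam_comp_equiv (fun m => ((z ^ m : Rˣ) : R)) (fun s => a s.1) e, mul_sum]
  refine sum_congr rfl fun τ _ => ?_
  rw [Lam_decomposeFin_symm, zpow_add, Units.val_mul]
  rfl
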